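/- Let G be a graph with no leaves (minimum degree ≥ 2) admitting a strongly antimagic labeling with induced vertex ordering v_1, ..., v_n. Suppose j satisfies deg(v_j) ≤ deg(v_{j+1}) − 2 or j = n. Then for every integer k ≥ 3, the graph obtained from G by attaching a k-cycle at v_j (adding k−1 new vertices forming a cycle through v_j) is strongly antimagic. -/

import Mathlib

/-!
Label the `k` cycle edges `1, …, k` in order around the cycle and add `k` to every old label.
A new vertex `uᵢ` then has sum `2i + 1 ≤ 2k - 1`, below every old vertex, whose sum is at least
`(k + 1) deg ≥ 2k + 2`; and an old vertex `a` has sum `φ(a) + k deg(a)`, plus `k + 1` at `x`.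
Since degrees are weakly increasing in `φ`, the old vertices keep their `φ`-order; the only
danger, `x` overtaking a vertex `w` with `φ(w) > φ(x)`, is excluded by the degree gap:
`deg w ≥ deg x + 2` adds at least `2k > k + 1` to `w`.
-/

open Finset

open scoped Classical

noncomputable section

variable {V : Type*} [Fintype V] [DecidableEq V]

/-- The finset of edges of a simple graph on a finite vertex type. -/
def edges (G : SimpleGraph V) : Finset (Sym2 V) :=
  Finset.univ.filter (fun e => e ∈ G.edgeSet)

/-- The vertex sum `φ_f(v)`: the sum of the labels of the edges incident to `v`. -/
def phi (G : SimpleGraph V) (f : Sym2 V → ℕ) (v : V) : ℕ :=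
  ∑ e ∈ (edges G).filter (fun e => v ∈ e), f e

/-- The degree of a vertex: the number of edges incident to it. -/
def deg (G : SimpleGraph V) (v : V) : ℕ :=
  ((edges G).filter (fun e => v ∈ e)).card

/-- `f` is a strongly antimagic labeling of `G`: a bijection from the edge set onto
`{1, …, m}` with pairwise distinct vertex sums, such that larger degree forces a
larger vertex sum. -/
def IsStronglyAntimagicLabeling (G : SimpleGraph V) (f : Sym2 V → ℕ) : Prop :=
  Set.BijOn f (edges G : Set (Sym2 V)) (Set.Icc 1 (edges G).card) ∧
  (∀ u v : V, u ≠ v → phi G f u ≠ phi G f v) ∧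
  (∀ u v : V, deg G v < deg G u → phi G f v < phi G f u)

/-- A graph is strongly antimagic if it admits a strongly antimagic labeling. -/
def IsStronglyAntimagic (G : SimpleGraph V) : Prop :=
  ∃ f : Sym2 V → ℕ, IsStronglyAntimagicLabeling G f

/-- Attach a `k`-cycle at `x`: add `k-1` new vertices `u_1, …, u_{k-1}` and edges
`x u_1, u_1 u_2, …, u_{k-2} u_{k-1}, u_{k-1} x`. -/
def attachCycle (G : SimpleGraph V) (x : V) (k : ℕ) : SimpleGraph (V ⊕ Fin (k - 1)) :=
  SimpleGraph.fromEdgeSet (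
    (Sym2.map Sum.inl '' G.edgeSet)
    ∪ {e | ∃ i j : Fin (k - 1), (j : ℕ) = (i : ℕ) + 1 ∧ e = s(Sum.inr i, Sum.inr j)}
    ∪ {e | ∃ i : Fin (k - 1), ((i : ℕ) = 0 ∨ (i : ℕ) = k - 2) ∧ e = s(Sum.inl x, Sum.inr i)})

open Fin.NatCast

theorem IsStronglyAntimagicLabeling.deg_le_of_phi_le {G : SimpleGraph V} {f : Sym2 V → ℕ}
    (hf : IsStronglyAntimagicLabeling G f) {a b : V} (h : phi G f a ≤ phi G f b) :
    deg G a ≤ deg G b :=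
  not_lt.1 fun hlt => (hf.2.2 a b hlt).not_ge h

theorem deg_le_phi {G : SimpleGraph V} {f : Sym2 V → ℕ} (hpos : ∀ e ∈ edges G, 1 ≤ f e)
    (a : V) : deg G a ≤ phi G f a := by
  simpa [deg, phi] using card_nsmul_le_sum _ f 1 fun e he => hpos e (mem_of_mem_filter e he)

section Cycle

variable {α : Type*}

/-- The `t`-th edge, `0 ≤ t ≤ c + 2`, of the cycle `x, inr 0, inr 1, …, inr (c + 1), x`. -/
def cycleEdge (x : α) (c t : ℕ) : Sym2 (α ⊕ Fin (c + 2)) :=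
  if t = 0 then s(Sum.inl x, Sum.inr 0)
  else if t = c + 2 then s(Sum.inl x, Sum.inr (Fin.last (c + 1)))
  else s(Sum.inr ((t - 1 : ℕ) : Fin (c + 2)), Sum.inr ((t : ℕ) : Fin (c + 2)))

-- An `inl`–`inr` pair is an edge only for `i = 0` or `i = c + 1`.
def attachLabelFun (c : ℕ) (f : Sym2 α → ℕ) : α ⊕ Fin (c + 2) → α ⊕ Fin (c + 2) → ℕ
  | Sum.inl a, Sum.inl b => f s(a, b) + (c + 3)
  | Sum.inl _, Sum.inr i => if (i : ℕ) = 0 then 1 else c + 3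
  | Sum.inr i, Sum.inl _ => if (i : ℕ) = 0 then 1 else c + 3
  | Sum.inr i, Sum.inr i' => min (i : ℕ) (i' : ℕ) + 2

theorem attachLabelFun_comm (c : ℕ) (f : Sym2 α → ℕ) (p q : α ⊕ Fin (c + 2)) :
    attachLabelFun c f p q = attachLabelFun c f q p := by
  rcases p with a | i <;> rcases q with b | i'
  · exact congrArg (· + (c + 3)) (congrArg f Sym2.eq_swap)
  · rfl
  · rfl
  · exact congrArg (· + 2) (Nat.min_comm _ _)

def attachLabel (c : ℕ) (f : Sym2 α → ℕ) : Sym2 (α ⊕ Fin (c + 2)) → ℕ :=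
  Sym2.lift ⟨attachLabelFun c f, attachLabelFun_comm c f⟩

theorem attachLabel_map_inl (c : ℕ) (f : Sym2 α → ℕ) (e : Sym2 α) :
    attachLabel c f (Sym2.map Sum.inl e) = f e + (c + 3) := by
  induction e using Sym2.ind with
  | _ a b => rfl

theorem attachLabel_cycleEdge (c : ℕ) (f : Sym2 α → ℕ) (x : α) {t : ℕ} (ht : t ≤ c + 2) :
    attachLabel c f (cycleEdge x c t) = t + 1 := by
  unfold cycleEdge
  split_ifs with h0 hlast
  · subst h0; rfl
  · subst hlast
    show (if ((Fin.last (c + 1) : Fin (c + 2)) : ℕ) = 0 then 1 else c + 3) = c + 2 + 1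
    simp
  · show min ((((t - 1 : ℕ) : Fin (c + 2))) : ℕ) (((t : ℕ) : Fin (c + 2)) : ℕ) + 2 = t + 1
    rw [Fin.val_cast_of_lt (by omega), Fin.val_cast_of_lt (by omega)]
    omega

theorem cycleEdge_injOn (x : α) (c : ℕ) : Set.InjOn (cycleEdge x c) (range (c + 3)) := by
  intro t ht t' ht' h
  have := attachLabel_cycleEdge c (fun _ => 0) x (t := t) (by simp at ht; omega)
  rw [h, attachLabel_cycleEdge c (fun _ => 0) x (by simp at ht'; omega)] at this
  omega

theorem inl_mem_cycleEdge_iff (x : α) (c : ℕ) (a : α) {t : ℕ} (ht : t ≤ c + 2) :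
    Sum.inl a ∈ cycleEdge x c t ↔ a = x ∧ (t = 0 ∨ t = c + 2) := by
  unfold cycleEdge
  split_ifs <;> simp [Sym2.mem_iff] <;> omega

theorem inr_mem_cycleEdge_iff (x : α) (c : ℕ) (i : Fin (c + 2)) {t : ℕ} (ht : t ≤ c + 2) :
    Sum.inr i ∈ cycleEdge x c t ↔ t = i ∨ t = i + 1 := by
  unfold cycleEdge
  split_ifs with h0 hlast
  · subst h0
    simp only [Sym2.mem_iff, Sum.inr.injEq, reduceCtorEq, false_or, Fin.ext_iff, Fin.val_zero,
      or_false]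
    omega
  · simp [Sym2.mem_iff, Fin.ext_iff]
    omega
  · simp [Sym2.mem_iff, Fin.ext_iff, Fin.val_cast_of_lt (show t - 1 < c + 2 by omega),
      Fin.val_cast_of_lt (show t < c + 2 by omega)]
    omega

theorem cycleEdge_not_isDiag (x : α) (c : ℕ) {t : ℕ} (ht : t ≤ c + 2) :
    ¬ (cycleEdge x c t).IsDiag := by
  unfold cycleEdge
  split_ifs
  · simp
  · simp
  · simp [Fin.ext_iff, Fin.val_cast_of_lt (show t - 1 < c + 2 by omega),
      Fin.val_cast_of_lt (show t < c + 2 by omega)]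
    omega

theorem disjoint_image_map_inl_image_cycleEdge [DecidableEq α] (s : Finset (Sym2 α)) (x : α)
    (c : ℕ) :
    Disjoint (s.image (Sym2.map Sum.inl)) ((range (c + 3)).image (cycleEdge x c)) := by
  simp only [disjoint_left, mem_image, mem_range, not_exists, not_and]
  rintro _ ⟨e, -, rfl⟩ t ht he
  have hmem := (inr_mem_cycleEdge_iff x c (min t (c + 1) : ℕ) (show t ≤ c + 2 by omega)).2
  rw [Fin.val_cast_of_lt (by omega), he] at hmem
  simpa [Sym2.mem_map] using hmem (by omega)

theorem filter_inl_mem_cycleEdge [DecidableEq α] (x a : α) (c : ℕ) :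
    (range (c + 3)).filter (Sum.inl a ∈ cycleEdge x c ·) = if a = x then {0, c + 2} else ∅ := by
  ext t
  simp only [mem_filter, mem_range]
  constructor
  · rintro ⟨ht, hmem⟩
    obtain ⟨rfl, ht'⟩ := (inl_mem_cycleEdge_iff x c a (by omega)).1 hmem
    simpa using ht'
  · intro h
    split_ifs at h with hax
    · simp only [mem_insert, mem_singleton] at h
      exact ⟨by omega, (inl_mem_cycleEdge_iff x c a (by omega)).2 ⟨hax, h⟩⟩
    · simp at h

theorem filter_inr_mem_cycleEdge [DecidableEq α] (x : α) (c : ℕ) (i : Fin (c + 2)) :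
    (range (c + 3)).filter (Sum.inr i ∈ cycleEdge x c ·) = {(i : ℕ), (i : ℕ) + 1} := by
  ext t
  simp only [mem_filter, mem_range, mem_insert, mem_singleton]
  constructor
  · rintro ⟨ht, hmem⟩
    exact (inr_mem_cycleEdge_iff x c i (by omega)).1 hmem
  · intro h
    exact ⟨by omega, (inr_mem_cycleEdge_iff x c i (by omega)).2 h⟩

theorem filter_inl_mem_map_inl [DecidableEq α] (s : Finset (Sym2 α)) (c : ℕ) (a : α) :
    s.filter ((Sum.inl a : α ⊕ Fin (c + 2)) ∈ Sym2.map Sum.inl ·) = s.filter (a ∈ ·) := by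
  simp [Sym2.mem_map]

theorem filter_inr_mem_map_inl [DecidableEq α] (s : Finset (Sym2 α)) (c : ℕ) (i : Fin (c + 2)) :
    s.filter ((Sum.inr i : α ⊕ Fin (c + 2)) ∈ Sym2.map Sum.inl ·) = ∅ := by
  simp [Sym2.mem_map]

end Cycle

/-- `attachCycle G x (c + 3)`, with vertex type `V ⊕ Fin (c + 2)` rather than
`V ⊕ Fin (c + 3 - 1)`, so that instances on its edges agree syntactically with those on
`cycleEdge x c t`. -/
def attachCycle' (G : SimpleGraph V) (x : V) (c : ℕ) : SimpleGraph (V ⊕ Fin (c + 2)) :=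
  attachCycle G x (c + 3)

theorem edges_attachCycle' (G : SimpleGraph V) (x : V) (c : ℕ) :
    edges (attachCycle' G x c) =
      (edges G).image (Sym2.map Sum.inl) ∪ (range (c + 3)).image (cycleEdge x c) := by
  ext e
  simp only [edges, mem_filter, mem_univ, true_and, attachCycle', attachCycle,
    SimpleGraph.edgeSet_fromEdgeSet, Set.mem_sdiff, Set.mem_union, Set.mem_image,
    mem_union, mem_image, mem_range]
  constructor
  · rintro ⟨(⟨e', he', rfl⟩ | ⟨i, j, hij, rfl⟩) | ⟨i, hi, rfl⟩, -⟩
    · exact Or.inl ⟨e', by simpa using he', rfl⟩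
    · refine Or.inr ⟨j, by omega, ?_⟩
      rw [cycleEdge, if_neg (by omega), if_neg (by omega)]
      congr <;> ext <;> rw [Fin.val_cast_of_lt (by omega)]
      omega
    · rcases hi with h0 | hlast
      · refine Or.inr ⟨0, by omega, ?_⟩
        rw [cycleEdge, if_pos rfl, show (0 : Fin (c + 2)) = i from Fin.ext h0.symm]
        rfl
      · refine Or.inr ⟨c + 2, by omega, ?_⟩
        rw [cycleEdge, if_neg (by omega), if_pos rfl,
          show Fin.last (c + 1) = i from Fin.ext (by simp; omega)]
        rfl
  · rintro (⟨e', he', rfl⟩ | ⟨t, ht, rfl⟩)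
    · obtain ⟨a, b, rfl⟩ := Sym2.exists.1 ⟨e', rfl⟩
      have hab : G.Adj a b := by simpa [edges] using he'
      exact ⟨Or.inl (Or.inl ⟨_, hab, rfl⟩), by simpa using hab.ne⟩
    · refine ⟨?_, cycleEdge_not_isDiag x c (by omega)⟩
      unfold cycleEdge
      split_ifs with h0 hlast
      · exact Or.inr ⟨(0 : Fin (c + 2)), Or.inl rfl, rfl⟩
      · exact Or.inr ⟨Fin.last (c + 1), Or.inr (by simp), rfl⟩
      · refine Or.inl (Or.inr ⟨_, _, ?_, rfl⟩)
        rw [Fin.val_cast_of_lt (show t < c + 2 by omega),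
          Fin.val_cast_of_lt (show t - 1 < c + 2 by omega)]
        omega

theorem filter_mem_edges_attachCycle' (G : SimpleGraph V) (x : V) (c : ℕ)
    (p : V ⊕ Fin (c + 2)) :
    (edges (attachCycle' G x c)).filter (p ∈ ·) =
      ((edges G).filter (p ∈ Sym2.map Sum.inl ·)).image (Sym2.map Sum.inl) ∪
        ((range (c + 3)).filter (p ∈ cycleEdge x c ·)).image (cycleEdge x c) := by
  rw [edges_attachCycle', filter_union, filter_image, filter_image]

theorem disjoint_filter_mem_edges_attachCycle' (G : SimpleGraph V) (x : V) (c : ℕ)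
    (p : V ⊕ Fin (c + 2)) :
    Disjoint (((edges G).filter (p ∈ Sym2.map Sum.inl ·)).image (Sym2.map Sum.inl))
      (((range (c + 3)).filter (p ∈ cycleEdge x c ·)).image (cycleEdge x c)) := by
  exact Disjoint.mono_right (image_subset_image (filter_subset _ _))
    (disjoint_image_map_inl_image_cycleEdge _ x c)

theorem deg_attachCycle' (G : SimpleGraph V) (x : V) (c : ℕ) (p : V ⊕ Fin (c + 2)) :
    deg (attachCycle' G x c) p =
      #((edges G).filter (p ∈ Sym2.map Sum.inl ·)) +
        #((range (c + 3)).filter (p ∈ cycleEdge x c ·)) := by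
  rw [deg, filter_mem_edges_attachCycle', card_union_of_disjoint
    (disjoint_filter_mem_edges_attachCycle' G x c p),
    card_image_of_injective _ (Sym2.map.injective Sum.inl_injective),
    card_image_of_injOn ((cycleEdge_injOn x c).mono (filter_subset _ _))]

theorem phi_attachCycle' (G : SimpleGraph V) (f : Sym2 V → ℕ) (x : V) (c : ℕ)
    (p : V ⊕ Fin (c + 2)) :
    phi (attachCycle' G x c) (attachLabel c f) p =
      ∑ e ∈ (edges G).filter (p ∈ Sym2.map Sum.inl ·), (f e + (c + 3)) +
        ∑ t ∈ (range (c + 3)).filter (p ∈ cycleEdge x c ·), (t + 1) := by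
  rw [phi, filter_mem_edges_attachCycle',
    sum_union (disjoint_filter_mem_edges_attachCycle' G x c p),
    sum_image fun _ _ _ _ h => Sym2.map.injective Sum.inl_injective h,
    sum_image fun _ ht _ ht' h =>
      cycleEdge_injOn x c (filter_subset _ _ ht) (filter_subset _ _ ht') h]
  congr 1
  · exact sum_congr rfl fun e _ => attachLabel_map_inl c f e
  · exact sum_congr rfl fun t ht => attachLabel_cycleEdge c f x (by simp at ht; omega)

theorem deg_attachCycle'_inl (G : SimpleGraph V) (x : V) (c : ℕ) (a : V) :
    deg (attachCycle' G x c) (Sum.inl a) = deg G a + if a = x then 2 else 0 := by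
  rw [deg_attachCycle', filter_inl_mem_map_inl, filter_inl_mem_cycleEdge, deg]
  split_ifs <;> simp

theorem deg_attachCycle'_inr (G : SimpleGraph V) (x : V) (c : ℕ) (i : Fin (c + 2)) :
    deg (attachCycle' G x c) (Sum.inr i) = 2 := by
  rw [deg_attachCycle', filter_inr_mem_map_inl, filter_inr_mem_cycleEdge]
  simp

theorem phi_attachCycle'_inl (G : SimpleGraph V) (f : Sym2 V → ℕ) (x : V) (c : ℕ) (a : V) :
    phi (attachCycle' G x c) (attachLabel c f) (Sum.inl a) =
      phi G f a + deg G a * (c + 3) + if a = x then c + 4 else 0 := by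
  rw [phi_attachCycle', filter_inl_mem_map_inl, filter_inl_mem_cycleEdge, sum_add_distrib,
    sum_const, smul_eq_mul, phi, deg]
  split_ifs
  · simp
    omega
  · simp

theorem phi_attachCycle'_inr (G : SimpleGraph V) (f : Sym2 V → ℕ) (x : V) (c : ℕ)
    (i : Fin (c + 2)) :
    phi (attachCycle' G x c) (attachLabel c f) (Sum.inr i) = 2 * i + 3 := by
  rw [phi_attachCycle', filter_inr_mem_map_inl, filter_inr_mem_cycleEdge, sum_pair (by omega)]
  simp
  omega

theorem card_edges_attachCycle' (G : SimpleGraph V) (x : V) (c : ℕ) :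
    #(edges (attachCycle' G x c)) = #(edges G) + (c + 3) := by
  rw [edges_attachCycle', card_union_of_disjoint (disjoint_image_map_inl_image_cycleEdge _ x c),
    card_image_of_injective _ (Sym2.map.injective Sum.inl_injective),
    card_image_of_injOn (cycleEdge_injOn x c), card_range]

theorem bijOn_attachLabel {G : SimpleGraph V} {f : Sym2 V → ℕ}
    (hf : Set.BijOn f (edges G) (Set.Icc 1 #(edges G))) (x : V) (c : ℕ) :
    Set.BijOn (attachLabel c f) (edges (attachCycle' G x c))
      (Set.Icc 1 #(edges (attachCycle' G x c))) := by
  rw [card_edges_attachCycle']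
  have hmaps : Set.MapsTo (attachLabel c f) (edges (attachCycle' G x c))
      (Set.Icc 1 (#(edges G) + (c + 3))) := by
    intro e he
    rw [mem_coe, edges_attachCycle', mem_union, mem_image, mem_image] at he
    rcases he with ⟨e, he, rfl⟩ | ⟨t, ht, rfl⟩
    · have := hf.mapsTo he
      rw [attachLabel_map_inl]
      simp only [Set.mem_Icc] at this ⊢
      omega
    · rw [mem_range] at ht
      rw [attachLabel_cycleEdge c f x (by omega)]
      simp only [Set.mem_Icc]
      omega
  have hsurj : Set.SurjOn (attachLabel c f) (edges (attachCycle' G x c))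
      (Set.Icc 1 (#(edges G) + (c + 3))) := by
    rintro y ⟨hy1, hy2⟩
    by_cases hyc : y ≤ c + 3
    · refine ⟨cycleEdge x c (y - 1), ?_, ?_⟩
      · rw [mem_coe, edges_attachCycle']
        exact mem_union_right _ (mem_image_of_mem _ (mem_range.2 (by omega)))
      · rw [attachLabel_cycleEdge c f x (by omega)]
        omega
    · obtain ⟨e, he, hfe⟩ := hf.surjOn (show y - (c + 3) ∈ Set.Icc 1 #(edges G) by
        simp only [Set.mem_Icc]; omega)
      refine ⟨Sym2.map Sum.inl e, ?_, ?_⟩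
      · rw [mem_coe, edges_attachCycle']
        exact mem_union_left _ (mem_image_of_mem _ he)
      · rw [attachLabel_map_inl, hfe]
        omega
  refine ⟨hmaps, ?_, hsurj⟩
  exact injOn_of_surjOn_of_card_le (t := Icc 1 (#(edges G) + (c + 3))) _
    (by simpa using hmaps) (by simpa using hsurj) (by simp [card_edges_attachCycle'])

section Comparison

variable {G : SimpleGraph V} {f : Sym2 V → ℕ} {x : V}

theorem phi_attachCycle'_inl_lt_inl (hf : IsStronglyAntimagicLabeling G f)
    (hx : ∀ w, phi G f x < phi G f w → deg G x + 2 ≤ deg G w) (c : ℕ) {a b : V}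
    (h : phi G f a < phi G f b) :
    phi (attachCycle' G x c) (attachLabel c f) (Sum.inl a) <
      phi (attachCycle' G x c) (attachLabel c f) (Sum.inl b) := by
  have hdeg := Nat.mul_le_mul_right (c + 3) (hf.deg_le_of_phi_le h.le)
  rw [phi_attachCycle'_inl, phi_attachCycle'_inl]
  split_ifs with ha hb hb
  · exact absurd h (by rw [ha, hb]; exact lt_irrefl _)
  · subst ha
    have hgap := Nat.mul_le_mul_right (c + 3) (hx b h)
    rw [add_mul] at hgap
    omega
  · omega
  · omega

theorem phi_lt_of_deg_attachCycle'_inl_lt (hf : IsStronglyAntimagicLabeling G f)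
    (hx : ∀ w, phi G f x < phi G f w → deg G x + 2 ≤ deg G w) {c : ℕ} {a b : V}
    (h : deg (attachCycle' G x c) (Sum.inl a) < deg (attachCycle' G x c) (Sum.inl b)) :
    phi G f a < phi G f b := by
  rw [deg_attachCycle'_inl, deg_attachCycle'_inl] at h
  split_ifs at h with ha hb hb
  · exact absurd h (by rw [ha, hb]; exact lt_irrefl _)
  · exact hf.2.2 b a (by omega)
  · subst hb
    refine lt_of_le_of_ne (not_lt.1 fun hlt => ?_) (hf.2.1 a b ha)
    have := hx a hlt
    omega
  · exact hf.2.2 b a (by omega)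

theorem phi_attachCycle'_inr_lt_inl (hpos : ∀ e ∈ edges G, 1 ≤ f e) (hdelta : ∀ w, 2 ≤ deg G w)
    (c : ℕ) (i : Fin (c + 2)) (a : V) :
    phi (attachCycle' G x c) (attachLabel c f) (Sum.inr i) <
      phi (attachCycle' G x c) (attachLabel c f) (Sum.inl a) := by
  have hdeg := Nat.mul_le_mul_right (c + 3) (hdelta a)
  have := deg_le_phi hpos a
  rw [phi_attachCycle'_inr, phi_attachCycle'_inl]
  omega

end Comparison

theorem IsStronglyAntimagicLabeling.attachCycle' {G : SimpleGraph V} {f : Sym2 V → ℕ}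
    (hf : IsStronglyAntimagicLabeling G f) (hdelta : ∀ w, 2 ≤ deg G w) {x : V}
    (hx : ∀ w, phi G f x < phi G f w → deg G x + 2 ≤ deg G w) (c : ℕ) :
    IsStronglyAntimagicLabeling (attachCycle' G x c) (attachLabel c f) := by
  have hpos : ∀ e ∈ edges G, 1 ≤ f e := fun e he => (hf.1.mapsTo he).1
  refine ⟨bijOn_attachLabel hf.1 x c, ?_, ?_⟩
  · rintro (a | i) (b | i') hne
    · rcases (hf.2.1 a b fun h => hne (congrArg _ h)).lt_or_gt with h | h
      · exact (phi_attachCycle'_inl_lt_inl hf hx c h).ne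
      · exact (phi_attachCycle'_inl_lt_inl hf hx c h).ne'
    · exact (phi_attachCycle'_inr_lt_inl hpos hdelta c i' a).ne'
    · exact (phi_attachCycle'_inr_lt_inl hpos hdelta c i b).ne
    · rw [phi_attachCycle'_inr, phi_attachCycle'_inr]
      exact fun h => hne (congrArg _ (Fin.ext (by omega)))
  · rintro (a | i) (b | i') hdeg
    · exact phi_attachCycle'_inl_lt_inl hf hx c (phi_lt_of_deg_attachCycle'_inl_lt hf hx hdeg)
    · exact phi_attachCycle'_inr_lt_inl hpos hdelta c i' a
    · rw [deg_attachCycle'_inr, deg_attachCycle'_inl] at hdeg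
      have := hdelta b
      omega
    · rw [deg_attachCycle'_inr, deg_attachCycle'_inr] at hdeg
      exact absurd hdeg (lt_irrefl _)

theorem stmt_4_general (G : SimpleGraph V) (hdelta : ∀ w : V, 2 ≤ deg G w)
    (f : Sym2 V → ℕ) (hf : IsStronglyAntimagicLabeling G f)
    (n : ℕ)
    (v : Fin n → V) (hv : Function.Bijective v)
    (hmono : StrictMono (fun i : Fin n => phi G f (v i)))
    (j : Fin n)
    (hj : (j : ℕ) + 1 = n ∨
      ∃ h : (j : ℕ) + 1 < n, deg G (v j) + 2 ≤ deg G (v ⟨(j : ℕ) + 1, h⟩))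
    (k : ℕ) (hk : 3 ≤ k) :
    IsStronglyAntimagic (attachCycle G (v j) k) := by
  obtain ⟨c, rfl⟩ : ∃ c, k = c + 3 := ⟨k - 3, by omega⟩
  have hx : ∀ w, phi G f (v j) < phi G f w → deg G (v j) + 2 ≤ deg G w := by
    intro w hw
    obtain ⟨i, rfl⟩ := hv.2 w
    have hji : (j : ℕ) < i := hmono.lt_iff_lt.1 hw
    rcases hj with hlast | ⟨hnext, hgap⟩
    · omega
    · exact hgap.trans (hf.deg_le_of_phi_le (hmono.monotone (Fin.mk_le_of_le_val hji)))
  exact ⟨attachLabel c f, hf.attachCycle' hdelta hx c⟩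

/-- attaching a `k`-cycle (`k ≥ 3`) at `v j` of a leafless strongly
antimagic graph, where `v j` is last in the φ-ordering or `deg (v j) ≤ deg (v (j+1)) - 2`,
yields a strongly antimagic graph. -/
theorem stmt_4 (G : SimpleGraph V) (hdelta : ∀ w : V, 2 ≤ deg G w)
    (f : Sym2 V → ℕ) (hf : IsStronglyAntimagicLabeling G f)
    (n : ℕ) (hn : n = Fintype.card V)
    (v : Fin n → V) (hv : Function.Bijective v)
    (hmono : StrictMono (fun i : Fin n => phi G f (v i)))
    (j : Fin n)
    (hj : (j : ℕ) + 1 = n ∨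
      ∃ h : (j : ℕ) + 1 < n, deg G (v j) + 2 ≤ deg G (v ⟨(j : ℕ) + 1, h⟩))
    (k : ℕ) (hk : 3 ≤ k) :
    IsStronglyAntimagic (attachCycle G (v j) k) :=
  stmt_4_general G hdelta f hf n v hv hmono j hj k hk
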